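/- arXiv:1906.00049 — 3 statements merged into one kernel-verified Lean document; each statement's English description precedes it below -/
import Mathlib

section
/- Let φ : ℝⁿ → ℝ be convex, C ⊆ ℝⁿ a convex set, ψ differentiable and convex, ρ > 0, and let x⁺ be a minimizer over C of u ↦ φ(u) + (1/ρ) B_ψ(u,x). Then for every z ∈ C, φ(x⁺) − φ(z) ≤ (1/ρ)(B_ψ(z,x) − B_ψ(z,x⁺) − B_ψ(x⁺,x)). -/
open RealInnerProductSpace InnerProductSpace Set

/- The objective is `φ + g` with `g = ρ⁻¹ B(·, x)` differentiable. On the segment from `xp` to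
`z ∈ C`, minimality of `φ + g` at `xp` and convexity of `φ` make
`t ↦ g (xp + t • (z - xp)) + t * (φ z - φ xp)` minimal at `t = 0` on `[0, 1]`, so its right
derivative `⟪∇g xp, z - xp⟫ + φ z - φ xp` is nonnegative. The three-point identity
`B z x - B z xp - B xp x = ⟪z - xp, Dψ xp - Dψ x⟫` turns this into the bound. -/

theorem ConvexOn.sub_le_fderiv_of_isMinOn_add {E : Type*} [NormedAddCommGroup E]
    [NormedSpace ℝ E] {f g : E → ℝ} {g' : E →L[ℝ] ℝ} {C : Set E} {x z : E}
    (hC : Convex ℝ C) (hf : ConvexOn ℝ C f) (hg : HasFDerivWithinAt g g' C x)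
    (hmin : IsMinOn (f + g) C x) (hx : x ∈ C) (hz : z ∈ C) :
    f x - f z ≤ g' (z - x) := by
  set k : ℝ → ℝ := fun t ↦ g (AffineMap.lineMap x z t) + t * (f z - f x)
  have hmaps : MapsTo (AffineMap.lineMap x z) (Icc (0 : ℝ) 1) C :=
    fun t ht ↦ hC.lineMap_mem hx hz ht
  have hk : HasDerivWithinAt k (g' (z - x) + (f z - f x)) (Icc 0 1) 0 := by
    have hg0 : HasFDerivWithinAt g g' C (AffineMap.lineMap x z (0 : ℝ)) := by simpa using hg
    exact (hg0.comp_hasDerivWithinAt 0 AffineMap.hasDerivWithinAt_lineMap hmaps).add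
      ((hasDerivWithinAt_id 0 _).mul_const _) |>.congr_deriv (by simp)
  have hkmin : IsMinOn k (Icc 0 1) 0 := by
    intro t ht
    have hft : f (AffineMap.lineMap x z t) ≤ (1 - t) * f x + t * f z := by
      simpa [AffineMap.lineMap_apply_module] using
        hf.2 hx hz (by linarith [ht.2]) ht.1 (by ring : 1 - t + t = 1)
    have hxt := hmin (hmaps ht)
    simp only [mem_ofPred_eq, Pi.add_apply] at hxt
    show k 0 ≤ k t
    simp only [k, AffineMap.lineMap_apply_zero, zero_mul, add_zero]
    linarith
  have hone : (1 : ℝ) ∈ posTangentConeAt (Icc (0 : ℝ) 1) 0 :=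
    mem_posTangentConeAt_of_segment_subset (by simp)
  have hderiv := hkmin.localize.hasFDerivWithinAt_nonneg hk.hasFDerivWithinAt hone
  simp only [ContinuousLinearMap.toSpanSingleton_apply, one_smul] at hderiv
  linarith

section Bregman

variable {E : Type*} [NormedAddCommGroup E] [InnerProductSpace ℝ E]

def bregman (ψ : E → ℝ) (Dψ : E → E) (a b : E) : ℝ := ψ a - ψ b - ⟪a - b, Dψ b⟫

theorem bregman_sub_bregman_sub_bregman (ψ : E → ℝ) (Dψ : E → E) (x y z : E) :
    bregman ψ Dψ z x - bregman ψ Dψ z y - bregman ψ Dψ y x = ⟪z - y, Dψ y - Dψ x⟫ := by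
  simp only [bregman, inner_sub_left, inner_sub_right]
  ring

theorem HasGradientAt.bregman_left [CompleteSpace E] {ψ : E → ℝ} {Dψ : E → E} {a : E}
    (hψ : HasGradientAt ψ (Dψ a) a) (b : E) :
    HasGradientAt (fun u ↦ bregman ψ Dψ u b) (Dψ a - Dψ b) a := by
  rw [hasGradientAt_iff_hasFDerivAt] at hψ ⊢
  have hlin : HasFDerivAt (fun u ↦ ⟪u - b, Dψ b⟫) (toDual ℝ E (Dψ b)) a :=
    ((toDual ℝ E (Dψ b)).hasFDerivAt.comp a ((hasFDerivAt_id a).sub_const b)).congr_of_eventuallyEq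
      (.of_eq (by ext u; simp [real_inner_comm]))
  rw [map_sub]
  exact (hψ.sub_const (ψ b)).sub hlin

end Bregman

theorem one_step_prox_general {n : ℕ}
    (φ ψ : EuclideanSpace ℝ (Fin n) → ℝ)
    (Dψ : EuclideanSpace ℝ (Fin n) → EuclideanSpace ℝ (Fin n))
    (hψdiff : ∀ x, HasGradientAt ψ (Dψ x) x)
    (hφconv : ConvexOn ℝ Set.univ φ)
    (C : Set (EuclideanSpace ℝ (Fin n))) (hC : Convex ℝ C)
    (B : EuclideanSpace ℝ (Fin n) → EuclideanSpace ℝ (Fin n) → ℝ)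
    (hB : ∀ a b, B a b = ψ a - ψ b - ⟪a - b, Dψ b⟫)
    (ρ : ℝ)
    (x xp : EuclideanSpace ℝ (Fin n)) (hxp : xp ∈ C)
    (hmin : ∀ u ∈ C, φ xp + (1 / ρ) * B xp x ≤ φ u + (1 / ρ) * B u x) :
    ∀ z ∈ C, φ xp - φ z ≤ (1 / ρ) * (B z x - B z xp - B xp x) := by
  intro z hz
  obtain rfl : B = bregman ψ Dψ := funext₂ hB
  have hprox := ((hψdiff xp).bregman_left x).hasFDerivAt.const_mul (1 / ρ)
  have hopt := (hφconv.subset (subset_univ C) hC).sub_le_fderiv_of_isMinOn_add hC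
    hprox.hasFDerivWithinAt (isMinOn_iff.mpr hmin) hxp hz
  rw [bregman_sub_bregman_sub_bregman, real_inner_comm]
  simpa only [smul_apply, toDual_apply_apply, smul_eq_mul] using hopt

/-- One-iteration bound for the proximal method with Bregman distance. -/
theorem one_step_prox {n : ℕ}
    (φ ψ : EuclideanSpace ℝ (Fin n) → ℝ)
    (Dψ : EuclideanSpace ℝ (Fin n) → EuclideanSpace ℝ (Fin n))
    (hψdiff : ∀ x, HasGradientAt ψ (Dψ x) x)
    (hψconv : ConvexOn ℝ Set.univ ψ)
    (hφconv : ConvexOn ℝ Set.univ φ)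
    (C : Set (EuclideanSpace ℝ (Fin n))) (hC : Convex ℝ C)
    (B : EuclideanSpace ℝ (Fin n) → EuclideanSpace ℝ (Fin n) → ℝ)
    (hB : ∀ a b, B a b = ψ a - ψ b - ⟪a - b, Dψ b⟫)
    (ρ : ℝ) (hρ : 0 < ρ)
    (x xp : EuclideanSpace ℝ (Fin n)) (hxp : xp ∈ C)
    (hmin : ∀ u ∈ C, φ xp + (1 / ρ) * B xp x ≤ φ u + (1 / ρ) * B u x) :
    ∀ z ∈ C, φ xp - φ z ≤ (1 / ρ) * (B z x - B z xp - B xp x) :=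
  one_step_prox_general φ ψ Dψ hψdiff hφconv C hC B hB ρ x xp hxp hmin
end

section
/- Let f, θ : ℝⁿ → ℝ be convex, ψ a σ_ψ-strongly convex differentiable function, C ⊆ ℝⁿ convex, ρ > 0, x ∈ C, and x⁺ the minimizer over C of u ↦ ⟨f'(x), u⟩ + θ(u) + (1/ρ) B_ψ(u,x), where f'(x) is a subgradient of f at x. Then for every z ∈ C, f(x) − f(z) + θ(x⁺) − θ(z) ≤ (1/ρ)(B_ψ(z,x) − B_ψ(z,x⁺)) + (2ρ/σ_ψ)‖f'(x)‖²_*, where ‖·‖_* is the dual norm. -/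
open RealInnerProductSpace

/-! Differentiating the objective of the proximal step along the segment from `x⁺` towards `z`
gives the variational inequality
`θ x⁺ - θ z ≤ ⟪g, z - x⁺⟫ + ρ⁻¹ ⟪∇ψ x⁺ - ∇ψ x, z - x⁺⟫`,
and the three-point identity turns the last term into `ρ⁻¹ (B z x - B z x⁺ - B x⁺ x)`.
Adding the subgradient inequality for `f` leaves `⟪g, x - x⁺⟫ - ρ⁻¹ B x⁺ x`, which strong
convexity (`B x⁺ x ≥ σ/2 ‖x⁺ - x‖²`) and Young's inequality bound by `ρ/(2σ) ‖g‖²`. -/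

open Filter Set InnerProductSpace

section Slope

variable {E : Type*} [NormedAddCommGroup E] [NormedSpace ℝ E]
  {φ : E → ℝ} {φ' : E →L[ℝ] ℝ} {p v : E} {c : ℝ}

theorem HasFDerivAt.apply_le_of_slope_le (hφ : HasFDerivAt φ φ' p)
    (h : ∀ t ∈ Ioo (0 : ℝ) 1, t⁻¹ * (φ (p + t • v) - φ p) ≤ c) : φ' v ≤ c :=
  le_of_tendsto (hφ.hasLineDerivAt v).tendsto_slope_zero_right
    (eventually_of_mem (Ioo_mem_nhdsGT one_pos) h)

theorem HasFDerivAt.le_apply_of_le_slope (hφ : HasFDerivAt φ φ' p)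
    (h : ∀ t ∈ Ioo (0 : ℝ) 1, c ≤ t⁻¹ * (φ (p + t • v) - φ p)) : c ≤ φ' v :=
  ge_of_tendsto (hφ.hasLineDerivAt v).tendsto_slope_zero_right
    (eventually_of_mem (Ioo_mem_nhdsGT one_pos) h)

end Slope

section Convex

theorem ConvexOn.apply_add_smul_sub_le {E : Type*} [AddCommGroup E] [Module ℝ E] {s : Set E}
    {f : E → ℝ} {p q : E} {t : ℝ} (hf : ConvexOn ℝ s f) (hp : p ∈ s) (hq : q ∈ s)
    (ht₀ : 0 ≤ t) (ht₁ : t ≤ 1) : f (p + t • (q - p)) ≤ f p + t * (f q - f p) := by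
  have h := hf.2 hp hq (sub_nonneg.2 ht₁) ht₀ (sub_add_cancel 1 t)
  rw [smul_eq_mul, smul_eq_mul] at h
  rw [show p + t • (q - p) = (1 - t) • p + t • q by module]
  linarith

variable {E : Type*} [NormedAddCommGroup E] [NormedSpace ℝ E] {s : Set E} {p q : E}

theorem ConvexOn.apply_sub_le_of_hasFDerivAt {f : E → ℝ} {f' : E →L[ℝ] ℝ}
    (hf : ConvexOn ℝ s f) (hp : p ∈ s) (hq : q ∈ s) (hf' : HasFDerivAt f f' p) :
    f' (q - p) ≤ f q - f p := by
  refine hf'.apply_le_of_slope_le fun t ht ↦ ?_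
  have := hf.apply_add_smul_sub_le hp hq ht.1.le ht.2.le
  rw [inv_mul_le_iff₀ ht.1]
  linarith

theorem IsMinOn.sub_le_apply_of_convexOn_add {φ θ : E → ℝ} {φ' : E →L[ℝ] ℝ}
    (hθ : ConvexOn ℝ s θ) (hφ : HasFDerivAt φ φ' p) (hp : p ∈ s)
    (hmin : IsMinOn (fun u ↦ φ u + θ u) s p) (hq : q ∈ s) :
    θ p - θ q ≤ φ' (q - p) := by
  refine hφ.le_apply_of_le_slope fun t ht ↦ ?_
  have hseg := hθ.apply_add_smul_sub_le hp hq ht.1.le ht.2.le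
  have hmin_t : φ p + θ p ≤ φ (p + t • (q - p)) + θ (p + t • (q - p)) :=
    hmin (hθ.1.add_smul_sub_mem hp hq ⟨ht.1.le, ht.2.le⟩)
  rw [le_inv_mul_iff₀ ht.1]
  linarith

end Convex

section Bregman

variable {F : Type*} [NormedAddCommGroup F] [InnerProductSpace ℝ F]

def bregmanDiv (ψ : F → ℝ) (Dψ : F → F) (a b : F) : ℝ := ψ a - ψ b - ⟪a - b, Dψ b⟫

variable {ψ : F → ℝ} {Dψ : F → F}

theorem bregmanDiv_three_point (a b c : F) :
    bregmanDiv ψ Dψ a b - bregmanDiv ψ Dψ a c - bregmanDiv ψ Dψ c b = ⟪Dψ c - Dψ b, a - c⟫ := by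
  simp only [bregmanDiv, inner_sub_left, inner_sub_right, real_inner_comm (Dψ c),
    real_inner_comm (Dψ b)]
  ring

variable [CompleteSpace F]

theorem StrongConvexOn.inner_add_half_mul_norm_sq_le {s : Set F} {m : ℝ} {p q : F} {G : F}
    (hψ : StrongConvexOn s m ψ) (hp : p ∈ s) (hq : q ∈ s) (hG : HasGradientAt ψ G p) :
    ψ p + ⟪G, q - p⟫ + m / 2 * ‖q - p‖ ^ 2 ≤ ψ q := by
  have hderiv := hG.hasFDerivAt.sub ((hasStrictFDerivAt_norm_sq p).hasFDerivAt.const_mul (m / 2))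
  have h := (strongConvexOn_iff_convex.1 hψ).apply_sub_le_of_hasFDerivAt hp hq hderiv
  have hnorm : ‖q‖ ^ 2 = ‖p‖ ^ 2 + 2 * ⟪p, q - p⟫ + ‖q - p‖ ^ 2 := by
    rw [← norm_add_sq_real, add_sub_cancel]
  simp only [sub_apply, smul_apply, InnerProductSpace.toDual_apply_apply,
    innerSL_apply_apply, smul_eq_mul, nsmul_eq_mul, Nat.cast_ofNat] at h
  rw [hnorm] at h
  linarith

theorem StrongConvexOn.half_mul_norm_sq_le_bregmanDiv {s : Set F} {m : ℝ} {a b : F}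
    (hψ : StrongConvexOn s m ψ) (ha : a ∈ s) (hb : b ∈ s) (hDψ : HasGradientAt ψ (Dψ b) b) :
    m / 2 * ‖a - b‖ ^ 2 ≤ bregmanDiv ψ Dψ a b := by
  have := hψ.inner_add_half_mul_norm_sq_le hb ha hDψ
  rw [bregmanDiv, real_inner_comm]
  linarith

theorem hasGradientAt_bregmanDiv_left {a b : F} (hDψ : HasGradientAt ψ (Dψ a) a) :
    HasGradientAt (fun u ↦ bregmanDiv ψ Dψ u b) (Dψ a - Dψ b) a := by
  have hlin : HasFDerivAt (fun u ↦ ⟪u - b, Dψ b⟫) (toDual ℝ F (Dψ b)) a := by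
    have hfun : (fun u ↦ ⟪u - b, Dψ b⟫) = fun u ↦ toDual ℝ F (Dψ b) u - toDual ℝ F (Dψ b) b := by
      ext u
      rw [toDual_apply_apply, toDual_apply_apply, ← inner_sub_right, real_inner_comm]
    rw [hfun]
    exact (toDual ℝ F (Dψ b)).hasFDerivAt.sub_const _
  rw [hasGradientAt_iff_hasFDerivAt, map_sub]
  exact (hDψ.hasFDerivAt.sub_const (ψ b)).sub hlin

theorem IsMinOn.sub_le_of_bregmanDiv_prox {θ : F → ℝ} {C : Set F} {g p x z : F} {c : ℝ}
    (hmin : IsMinOn (fun u ↦ ⟪g, u⟫ + θ u + c * bregmanDiv ψ Dψ u x) C p)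
    (hθ : ConvexOn ℝ C θ) (hDψ : HasGradientAt ψ (Dψ p) p) (hp : p ∈ C) (hz : z ∈ C) :
    θ p - θ z ≤ ⟪g, z - p⟫ + c * ⟪Dψ p - Dψ x, z - p⟫ := by
  have hsmooth : HasGradientAt (fun u ↦ ⟪g, u⟫ + c * bregmanDiv ψ Dψ u x)
      (g + c • (Dψ p - Dψ x)) p := by
    rw [hasGradientAt_iff_hasFDerivAt, map_add, map_smul]
    exact (toDual ℝ F g).hasFDerivAt.add
      ((hasGradientAt_bregmanDiv_left hDψ).hasFDerivAt.const_mul c)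
  have hmin' : IsMinOn (fun u ↦ (⟪g, u⟫ + c * bregmanDiv ψ Dψ u x) + θ u) C p := by
    convert hmin using 2; ring
  have := hmin'.sub_le_apply_of_convexOn_add hθ hsmooth.hasFDerivAt hp hz
  rwa [toDual_apply_apply, inner_add_left, real_inner_smul_left] at this

end Bregman

theorem inner_sub_half_mul_norm_sq_le {F : Type*} [NormedAddCommGroup F] [InnerProductSpace ℝ F]
    (g w : F) {c : ℝ} (hc : 0 < c) : ⟪g, w⟫ - c / 2 * ‖w‖ ^ 2 ≤ ‖g‖ ^ 2 / (2 * c) := by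
  rw [le_div_iff₀ (by positivity)]
  nlinarith [real_inner_le_norm g w, sq_nonneg (‖g‖ - c * ‖w‖)]

theorem one_step_prox_gradient_general {n : ℕ}
    (f θ ψ : EuclideanSpace ℝ (Fin n) → ℝ)
    (Dψ : EuclideanSpace ℝ (Fin n) → EuclideanSpace ℝ (Fin n))
    (hψdiff : ∀ x, HasGradientAt ψ (Dψ x) x)
    (σ : ℝ) (hσ : 0 < σ)
    (hψstrong : StrongConvexOn Set.univ σ ψ)
    (hθconv : ConvexOn ℝ Set.univ θ)
    (C : Set (EuclideanSpace ℝ (Fin n))) (hC : Convex ℝ C)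
    (B : EuclideanSpace ℝ (Fin n) → EuclideanSpace ℝ (Fin n) → ℝ)
    (hB : ∀ a b, B a b = ψ a - ψ b - ⟪a - b, Dψ b⟫)
    (ρ : ℝ) (hρ : 0 < ρ)
    (x xp : EuclideanSpace ℝ (Fin n)) (hxp : xp ∈ C)
    (g : EuclideanSpace ℝ (Fin n))
    (hsub : ∀ z, f x + ⟪g, z - x⟫ ≤ f z)  -- g is a subgradient of f at x
    (hmin : ∀ u ∈ C,
      ⟪g, xp⟫ + θ xp + (1 / ρ) * B xp x ≤ ⟪g, u⟫ + θ u + (1 / ρ) * B u x) :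
    ∀ z ∈ C, f x - f z + θ xp - θ z ≤
      (1 / ρ) * (B z x - B z xp) + (2 * ρ / σ) * ‖g‖ ^ 2 := by
  intro z hz
  obtain rfl : B = bregmanDiv ψ Dψ := funext₂ hB
  have hprox := IsMinOn.sub_le_of_bregmanDiv_prox (isMinOn_iff.2 hmin)
    (hθconv.subset (subset_univ C) hC) (hψdiff xp) hxp hz
  rw [← bregmanDiv_three_point (ψ := ψ)] at hprox
  have hreg : σ / ρ / 2 * ‖x - xp‖ ^ 2 ≤ 1 / ρ * bregmanDiv ψ Dψ xp x := calc
    _ = 1 / ρ * (σ / 2 * ‖xp - x‖ ^ 2) := by rw [norm_sub_rev]; ring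
    _ ≤ _ := by
      gcongr
      exact hψstrong.half_mul_norm_sq_le_bregmanDiv (mem_univ _) (mem_univ _) (hψdiff x)
  have hfenchel : ⟪g, x - xp⟫ - 1 / ρ * bregmanDiv ψ Dψ xp x ≤ 2 * ρ / σ * ‖g‖ ^ 2 := calc
    _ ≤ ⟪g, x - xp⟫ - σ / ρ / 2 * ‖x - xp‖ ^ 2 := sub_le_sub_left hreg _
    _ ≤ ‖g‖ ^ 2 / (2 * (σ / ρ)) := inner_sub_half_mul_norm_sq_le g _ (div_pos hσ hρ)
    _ = ρ / (2 * σ) * ‖g‖ ^ 2 := by field_simp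
    _ ≤ 2 * ρ / σ * ‖g‖ ^ 2 := by gcongr <;> linarith
  have hsubz := hsub z
  simp only [inner_sub_right] at hsubz hprox hfenchel
  linear_combination hsubz + hprox + hfenchel

/-- One-iteration bound for the proximal gradient (mirror-descent) method. -/
theorem one_step_prox_gradient {n : ℕ}
    (f θ ψ : EuclideanSpace ℝ (Fin n) → ℝ)
    (Dψ : EuclideanSpace ℝ (Fin n) → EuclideanSpace ℝ (Fin n))
    (hψdiff : ∀ x, HasGradientAt ψ (Dψ x) x)
    (σ : ℝ) (hσ : 0 < σ)
    (hψstrong : StrongConvexOn Set.univ σ ψ)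
    (hfconv : ConvexOn ℝ Set.univ f)
    (hθconv : ConvexOn ℝ Set.univ θ)
    (C : Set (EuclideanSpace ℝ (Fin n))) (hC : Convex ℝ C)
    (B : EuclideanSpace ℝ (Fin n) → EuclideanSpace ℝ (Fin n) → ℝ)
    (hB : ∀ a b, B a b = ψ a - ψ b - ⟪a - b, Dψ b⟫)
    (ρ : ℝ) (hρ : 0 < ρ)
    (x xp : EuclideanSpace ℝ (Fin n)) (hx : x ∈ C) (hxp : xp ∈ C)
    (g : EuclideanSpace ℝ (Fin n))
    (hsub : ∀ z, f x + ⟪g, z - x⟫ ≤ f z)  -- g is a subgradient of f at x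
    (hmin : ∀ u ∈ C,
      ⟪g, xp⟫ + θ xp + (1 / ρ) * B xp x ≤ ⟪g, u⟫ + θ u + (1 / ρ) * B u x) :
    ∀ z ∈ C, f x - f z + θ xp - θ z ≤
      (1 / ρ) * (B z x - B z xp) + (2 * ρ / σ) * ‖g‖ ^ 2 :=
  one_step_prox_gradient_general f θ ψ Dψ hψdiff σ hσ hψstrong hθconv C hC B hB ρ hρ x xp hxp g hsub
    hmin
end

section
/- For ε ∈ [0,1), ρ_t = t^{−ε}, and S = {t, t+1, …, t + ⌈t^ε⌉} for any natural number t ≥ 1, the partial sum satisfies log 2 ≤ Σ_{i ∈ S} ρ_i ≤ 3. -/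
/-!
Lower bound: on the window `i ^ (-ε) = i ^ (1 - ε) / i ≥ t ^ (1 - ε) / i`, and the harmonic sum over
`[t, t + n]` dominates `log ((t + n + 1) / t)`. Since the window has at least `t ^ ε` terms beyond `t`,
this gives `∑ ≥ x * log (1 + 1 / x)` with `x = t ^ (1 - ε) ≥ 1`, and concavity of `log` between `1` and `2`
gives `x * log (1 + 1 / x) ≥ log 2`.

Upper bound: each of the `⌈t ^ ε⌉ + 1 ≤ t ^ ε + 2` terms is at most `t ^ (-ε)`, so the sum is at most
`1 + 2 * t ^ (-ε) ≤ 3`.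
-/

open Finset

theorem Real.mul_log_two_le_log_one_add {v : ℝ} (hv0 : 0 ≤ v) (hv1 : v ≤ 1) :
    v * Real.log 2 ≤ Real.log (1 + v) := by
  have h := strictConcaveOn_log_Ioi.concaveOn.2 (Set.mem_Ioi.2 one_pos) (Set.mem_Ioi.2 two_pos)
    (sub_nonneg.2 hv1) hv0 (by ring)
  simp only [smul_eq_mul, Real.log_one, mul_zero, zero_add] at h
  rwa [show (1 - v) * 1 + v * 2 = 1 + v by ring] at h

theorem Real.log_two_le_mul_log_one_add_inv {x : ℝ} (hx : 1 ≤ x) :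
    Real.log 2 ≤ x * Real.log (1 + x⁻¹) := by
  have hx0 : 0 < x := one_pos.trans_le hx
  calc Real.log 2 = x * (x⁻¹ * Real.log 2) := by field_simp
    _ ≤ x * Real.log (1 + x⁻¹) := by
      gcongr
      exact Real.mul_log_two_le_log_one_add (inv_nonneg.2 hx0.le) (inv_le_one_of_one_le₀ hx)

theorem log_div_le_sum_Icc_inv {t : ℕ} (ht : 0 < t) (n : ℕ) :
    Real.log ((t + n + 1) / t) ≤ ∑ i ∈ Icc t (t + n), (i : ℝ)⁻¹ := by
  have ht' : (0 : ℝ) < t := by exact_mod_cast ht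
  induction n with
  | zero =>
    have h := Real.log_le_sub_one_of_pos (x := (t + 1) / t) (by positivity)
    simpa [add_div, ht'.ne'] using h
  | succ n ih =>
    have step : Real.log ((t + n + 2) / (t + n + 1)) ≤ ((t + n + 1 : ℕ) : ℝ)⁻¹ := by
      have h := Real.log_le_sub_one_of_pos (x := (t + n + 2) / (t + n + 1)) (by positivity)
      push_cast
      convert h using 1
      field_simp
      ring
    rw [← Nat.add_assoc, sum_Icc_succ_top (by omega)]
    calc Real.log ((t + (n + 1 : ℕ) + 1) / t)
        = Real.log ((t + n + 1) / t) + Real.log ((t + n + 2) / (t + n + 1)) := by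
          rw [← Real.log_mul (by positivity) (by positivity)]
          congr 1
          push_cast
          field_simp
          ring
      _ ≤ _ := add_le_add ih step

theorem inv_mul_rpow_le_rpow_neg {ε t i : ℝ} (hε : ε ≤ 1) (ht : 0 < t) (hti : t ≤ i) :
    t ^ (1 - ε) * i⁻¹ ≤ i ^ (-ε) := by
  have hi : 0 < i := ht.trans_le hti
  rw [show -ε = (1 - ε) - 1 by ring, Real.rpow_sub_one hi.ne', div_eq_mul_inv]
  gcongr

theorem sum_Icc_rpow_neg_le {ε : ℝ} (hε : 0 ≤ ε) {t : ℕ} (ht : 0 < t) (n : ℕ) :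
    ∑ i ∈ Icc t (t + n), (i : ℝ) ^ (-ε) ≤ (n + 1) * (t : ℝ) ^ (-ε) := by
  calc ∑ i ∈ Icc t (t + n), (i : ℝ) ^ (-ε) ≤ ∑ _i ∈ Icc t (t + n), (t : ℝ) ^ (-ε) := by
        refine sum_le_sum fun i hi => ?_
        exact Real.rpow_le_rpow_of_nonpos (by exact_mod_cast ht)
          (by exact_mod_cast (mem_Icc.1 hi).1) (neg_nonpos.2 hε)
    _ = (n + 1) * (t : ℝ) ^ (-ε) := by
        rw [sum_const, Nat.card_Icc, nsmul_eq_mul, show t + n + 1 - t = n + 1 by omega]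
        push_cast; ring

theorem log_two_le_sum_Icc_rpow_neg {ε : ℝ} (hε : ε ≤ 1) {t : ℕ} (ht : 1 ≤ t) {n : ℕ}
    (hn : (t : ℝ) ^ ε ≤ n) :
    Real.log 2 ≤ ∑ i ∈ Icc t (t + n), (i : ℝ) ^ (-ε) := by
  have ht1 : (1 : ℝ) ≤ t := by exact_mod_cast ht
  have ht0 : (0 : ℝ) < t := one_pos.trans_le ht1
  have hx : 1 ≤ (t : ℝ) ^ (1 - ε) := Real.one_le_rpow ht1 (by linarith)
  have hinv : ((t : ℝ) ^ (1 - ε))⁻¹ = (t : ℝ) ^ ε / t := by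
    rw [Real.rpow_sub ht0, Real.rpow_one, inv_div]
  calc Real.log 2 ≤ (t : ℝ) ^ (1 - ε) * Real.log (1 + ((t : ℝ) ^ (1 - ε))⁻¹) :=
        Real.log_two_le_mul_log_one_add_inv hx
    _ ≤ (t : ℝ) ^ (1 - ε) * Real.log ((t + n + 1) / t) := by
        gcongr
        rw [hinv, le_div_iff₀ ht0, add_mul, one_mul, div_mul_cancel₀ _ ht0.ne']
        linarith
    _ ≤ (t : ℝ) ^ (1 - ε) * ∑ i ∈ Icc t (t + n), (i : ℝ)⁻¹ := by
        gcongr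
        exact log_div_le_sum_Icc_inv (by omega) n
    _ ≤ ∑ i ∈ Icc t (t + n), (i : ℝ) ^ (-ε) := by
        rw [mul_sum]
        exact sum_le_sum fun i hi =>
          inv_mul_rpow_le_rpow_neg hε ht0 (by exact_mod_cast (mem_Icc.1 hi).1)

theorem sum_Icc_rpow_neg_le_three {ε : ℝ} (hε : 0 ≤ ε) {t : ℕ} (ht : 1 ≤ t) {n : ℕ}
    (hn : (n : ℝ) ≤ (t : ℝ) ^ ε + 1) :
    ∑ i ∈ Icc t (t + n), (i : ℝ) ^ (-ε) ≤ 3 := by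
  have ht1 : (1 : ℝ) ≤ t := by exact_mod_cast ht
  have hcancel : (t : ℝ) ^ ε * (t : ℝ) ^ (-ε) = 1 := by
    rw [← Real.rpow_add (by positivity), add_neg_cancel, Real.rpow_zero]
  have hsmall : (t : ℝ) ^ (-ε) ≤ 1 := Real.rpow_le_one_of_one_le_of_nonpos ht1 (by linarith)
  have hpos : 0 < (t : ℝ) ^ (-ε) := by positivity
  calc _ ≤ (n + 1) * (t : ℝ) ^ (-ε) := sum_Icc_rpow_neg_le hε (by omega) n
    _ ≤ ((t : ℝ) ^ ε + 2) * (t : ℝ) ^ (-ε) := mul_le_mul_of_nonneg_right (by linarith) hpos.le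
    _ ≤ 3 := by nlinarith

/-- Bounded subsequences: for ρ_i = i^{-ε} and S = {t, …, t + ⌈t^ε⌉},
    log 2 ≤ Σ_{i ∈ S} ρ_i ≤ 3. -/
theorem sum_window_rho_bounds (ε : ℝ) (hε0 : 0 ≤ ε) (hε1 : ε < 1)
    (t : ℕ) (ht : 1 ≤ t) :
    Real.log 2 ≤ ∑ i ∈ Finset.Icc t (t + ⌈(t : ℝ) ^ ε⌉₊), (i : ℝ) ^ (-ε) ∧
    ∑ i ∈ Finset.Icc t (t + ⌈(t : ℝ) ^ ε⌉₊), (i : ℝ) ^ (-ε) ≤ 3 :=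
  ⟨log_two_le_sum_Icc_rpow_neg hε1.le ht (Nat.le_ceil _),
    sum_Icc_rpow_neg_le_three hε0 ht (Nat.ceil_lt_add_one (by positivity)).le⟩
end
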